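/- arXiv:2401.00385 — 5 statements merged into one kernel-verified Lean document; each statement's English description precedes it below -/
import Mathlib

section
/- Let ψ : ℝ^d → ℝ^d be defined by ψ(x) = x(1+|x|^δ)^{-1} for some δ ≥ 2. Then for all x ∈ ℝ^d, the operator norm of the first derivative satisfies ‖ψ'(x)‖ ≤ 1 + δ/4. -/
/-!
With `t = ‖x‖ ^ δ`, the derivative `ψ'(x) = (1 + t)⁻¹ • id - δ ‖x‖ ^ (δ - 2) (1 + t)⁻² • x ⟪x, ·⟫`
is a multiple of the identity plus a rank-one operator, so
`‖ψ'(x)‖ ≤ (1 + t)⁻¹ + δ t / (1 + t) ^ 2`; since `(1 + t)⁻¹ ≤ 1` and `(1 + t) ^ 2 ≥ 4 t`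
(AM-GM), this is at most `1 + δ / 4`.
-/

variable {E : Type*} [NormedAddCommGroup E] [InnerProductSpace ℝ E]

theorem norm_smul_id_add_smulRight_innerSL_le (c a : ℝ) (x : E) :
    ‖c • ContinuousLinearMap.id ℝ E + (a • innerSL ℝ x).smulRight x‖ ≤ |c| + |a| * ‖x‖ ^ 2 := by
  calc _ ≤ ‖c • ContinuousLinearMap.id ℝ E‖ + ‖(a • innerSL ℝ x).smulRight x‖ := norm_add_le _ _
    _ ≤ |c| * 1 + |a| * ‖x‖ * ‖x‖ := by
      rw [norm_smul, ContinuousLinearMap.norm_smulRight_apply, norm_smul, innerSL_apply_norm,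
        Real.norm_eq_abs, Real.norm_eq_abs]
      gcongr
      exact ContinuousLinearMap.norm_id_le
    _ = |c| + |a| * ‖x‖ ^ 2 := by ring

theorem hasFDerivAt_inv_one_add_norm_rpow_smul {p : ℝ} (hp : 1 < p) (x : E) :
    HasFDerivAt (fun y : E => (1 + ‖y‖ ^ p)⁻¹ • y)
      ((1 + ‖x‖ ^ p)⁻¹ • ContinuousLinearMap.id ℝ E +
        ((-((1 + ‖x‖ ^ p) ^ 2)⁻¹ * (p * ‖x‖ ^ (p - 2))) • innerSL ℝ x).smulRight x) x := by
  have hpos : 0 < 1 + ‖x‖ ^ p := by positivity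
  have hinv := (hasDerivAt_inv hpos.ne').comp_hasFDerivAt x
    ((hasFDerivAt_norm_rpow x hp).const_add 1)
  rw [smul_smul] at hinv
  exact hinv.smul (hasFDerivAt_id x)

theorem inv_one_add_add_mul_div_one_add_sq_le {t p : ℝ} (ht : 0 ≤ t) (hp : 0 ≤ p) :
    (1 + t)⁻¹ + p * t / (1 + t) ^ 2 ≤ 1 + p / 4 := by
  have hinv : (1 + t)⁻¹ ≤ 1 := inv_le_one_of_one_le₀ (by linarith)
  have hquarter : t / (1 + t) ^ 2 ≤ 1 / 4 := by
    rw [div_le_div_iff₀ (by positivity) (by norm_num)]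
    nlinarith [sq_nonneg (1 - t)]
  calc (1 + t)⁻¹ + p * t / (1 + t) ^ 2 = (1 + t)⁻¹ + p * (t / (1 + t) ^ 2) := by ring
    _ ≤ 1 + p * (1 / 4) := by gcongr
    _ = 1 + p / 4 := by ring

theorem norm_fderiv_inv_one_add_norm_rpow_smul_le {p : ℝ} (hp : 1 < p) (x : E) :
    ‖fderiv ℝ (fun y : E => (1 + ‖y‖ ^ p)⁻¹ • y) x‖ ≤ 1 + p / 4 := by
  have hpos : 0 < 1 + ‖x‖ ^ p := by positivity
  have hpow : ‖x‖ ^ (p - 2) * ‖x‖ ^ 2 = ‖x‖ ^ p := by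
    rw [← Real.rpow_natCast, ← Real.rpow_add' (norm_nonneg x) (by push_cast; linarith)]
    norm_num
  rw [(hasFDerivAt_inv_one_add_norm_rpow_smul hp x).fderiv]
  refine (norm_smul_id_add_smulRight_innerSL_le _ _ x).trans (le_of_eq_of_le ?_
    (inv_one_add_add_mul_div_one_add_sq_le (t := ‖x‖ ^ p) (by positivity) (by linarith)))
  rw [abs_of_pos (inv_pos.2 hpos), abs_mul, abs_neg, abs_of_pos (by positivity),
    abs_of_nonneg (by positivity), ← hpow]
  ring

/-- For `ψ(x) = x (1 + |x|^δ)⁻¹` with `δ ≥ 2`, the operator norm of the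
Fréchet derivative satisfies `‖ψ'(x)‖ ≤ 1 + δ/4`. -/
theorem stmt0 (d : ℕ) (δ : ℝ) (hδ : 2 ≤ δ)
    (ψ : EuclideanSpace ℝ (Fin d) → EuclideanSpace ℝ (Fin d))
    (hψ : ∀ x, ψ x = (1 + ‖x‖ ^ δ)⁻¹ • x) :
    ∀ x : EuclideanSpace ℝ (Fin d), ‖fderiv ℝ ψ x‖ ≤ 1 + δ / 4 := by
  obtain rfl : ψ = fun y => (1 + ‖y‖ ^ δ)⁻¹ • y := funext hψ
  exact norm_fderiv_inv_one_add_norm_rpow_smul_le (by linarith)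
end

section
/- Let ψ : ℝ^d → ℝ^d be defined by ψ(x) = x(1+|x|^δ)^{-1} with δ ≥ 2. Then for all x ∈ ℝ^d and all unit vectors u ∈ ℝ^d, the second derivative satisfies |ψ''(x)(u,u)| ≤ min(3δ² + δ, (3δ² + δ)|x|^{δ-1}). -/
/-!
Write `ψ y = F (‖y‖²) • y` with `F s = (1 + s ^ (δ/2))⁻¹`. As `‖·‖²` is smooth,
`Dψ(y) = F • id + 2 F' • (y ⊗ y)` everywhere, and for `x ≠ 0` the second derivative
`D²ψ(x)(u, u) = (4 F'' ⟪x, u⟫² + 2 F' ‖u‖²) • x + 4 F' ⟪x, u⟫ • u` has norm at most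
`(4 |F''| ‖x‖² + 6 |F'|) ‖x‖`, which for this `F` is at most `(3δ² + δ) ‖x‖^(δ-1) F²` because
`‖x‖^δ F ≤ 1`. At `x = 0`, `F'` is merely continuous (`δ/2 - 1` may lie in `(0, 1)`), but
`Dψ(h) - Dψ(0) = O(‖h‖²)`, so `D²ψ(0) = 0`.
-/

open Asymptotics Topology InnerProductSpace Filter
open scoped RealInnerProductSpace

section Radial

variable {E : Type*} [NormedAddCommGroup E] [InnerProductSpace ℝ E]
  {F F' : ℝ → ℝ} {F'' : ℝ} {x : E}

noncomputable def radialFDeriv (F F' : ℝ → ℝ) (y : E) : E →L[ℝ] E :=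
  F (‖y‖ ^ 2) • ContinuousLinearMap.id ℝ E + (2 * F' (‖y‖ ^ 2)) • rankOne ℝ y y

theorem hasFDerivAt_radial (hF : HasDerivAt F (F' (‖x‖ ^ 2)) (‖x‖ ^ 2)) :
    HasFDerivAt (fun y ↦ F (‖y‖ ^ 2) • y) (radialFDeriv F F' x) x := by
  refine ((hF.comp_hasFDerivAt x (hasStrictFDerivAt_norm_sq x).hasFDerivAt).smul
    (hasFDerivAt_id x)).congr_fderiv ?_
  ext u
  simp only [Function.comp_apply, id_eq, add_apply, smul_apply, ContinuousLinearMap.id_apply,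
    ContinuousLinearMap.smulRight_apply, coe_innerSL_apply, nsmul_eq_mul, smul_eq_mul,
    radialFDeriv, rankOne_apply]
  module

theorem fderiv_radial (hF : ∀ s, 0 ≤ s → HasDerivAt F (F' s) s) :
    fderiv ℝ (fun y : E ↦ F (‖y‖ ^ 2) • y) = radialFDeriv F F' :=
  funext fun _ ↦ (hasFDerivAt_radial (hF _ (sq_nonneg _))).fderiv

theorem fderiv_radialFDeriv_apply_apply (hF : HasDerivAt F (F' (‖x‖ ^ 2)) (‖x‖ ^ 2))
    (hF' : HasDerivAt F' F'' (‖x‖ ^ 2)) (u v : E) :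
    fderiv ℝ (radialFDeriv F F') x u v =
      (4 * F'' * ⟪x, u⟫ * ⟪x, v⟫ + 2 * F' (‖x‖ ^ 2) * ⟪u, v⟫) • x
        + (2 * F' (‖x‖ ^ 2) * ⟪x, v⟫) • u + (2 * F' (‖x‖ ^ 2) * ⟪x, u⟫) • v := by
  have hsq := (hasStrictFDerivAt_norm_sq x).hasFDerivAt
  -- `B y z = rankOne ℝ z y`, written as an `ℝ`-bilinear map so that it can be differentiated
  let B : E →L[ℝ] E →L[ℝ] E →L[ℝ] E := (ContinuousLinearMap.smulRightL ℝ E E).comp (innerSL ℝ)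
  have h := ((hF.comp_hasFDerivAt x hsq).smul_const (ContinuousLinearMap.id ℝ E)).add
    (((hF'.comp_hasFDerivAt x hsq).const_mul 2).smul
      (B.hasFDerivAt_of_bilinear (hasFDerivAt_id x) (hasFDerivAt_id x)))
  rw [(show HasFDerivAt (radialFDeriv F F') _ x from h).fderiv]
  simp only [Function.comp_apply, id_eq, ContinuousLinearMap.precompR_apply,
    ContinuousLinearMap.comp_apply, ContinuousLinearMap.compL_apply, ContinuousLinearMap.comp_id,
    ContinuousLinearMap.smulRightL_apply_apply, add_apply,
    ContinuousLinearMap.smulRight_apply, smul_apply, coe_innerSL_apply,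
    nsmul_eq_mul, smul_eq_mul, ContinuousLinearMap.precompL_apply, ContinuousLinearMap.id_apply, B]
  module

theorem norm_fderiv_radialFDeriv_apply_self_le (hF : HasDerivAt F (F' (‖x‖ ^ 2)) (‖x‖ ^ 2))
    (hF' : HasDerivAt F' F'' (‖x‖ ^ 2)) (u : E) :
    ‖fderiv ℝ (radialFDeriv F F') x u u‖
      ≤ (4 * |F''| * ‖x‖ ^ 2 + 6 * |F' (‖x‖ ^ 2)|) * ‖x‖ * ‖u‖ ^ 2 := by
  have hxu : |⟪x, u⟫| ≤ ‖x‖ * ‖u‖ := abs_real_inner_le_norm x u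
  rw [fderiv_radialFDeriv_apply_apply hF hF', real_inner_self_eq_norm_sq]
  set c := F' (‖x‖ ^ 2)
  calc _ ≤ |4 * F'' * ⟪x, u⟫ * ⟪x, u⟫ + 2 * c * ‖u‖ ^ 2| * ‖x‖
          + |2 * c * ⟪x, u⟫| * ‖u‖ + |2 * c * ⟪x, u⟫| * ‖u‖ := by
        simp only [← Real.norm_eq_abs, ← norm_smul]
        exact (norm_add_le _ _).trans (add_le_add_left (norm_add_le _ _) _)
    _ ≤ (4 * |F''| * (‖x‖ * ‖u‖) * (‖x‖ * ‖u‖) + 2 * |c| * ‖u‖ ^ 2) * ‖x‖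
          + 2 * |c| * (‖x‖ * ‖u‖) * ‖u‖ + 2 * |c| * (‖x‖ * ‖u‖) * ‖u‖ := by
        have h₁ := abs_add_le (4 * F'' * ⟪x, u⟫ * ⟪x, u⟫) (2 * c * ‖u‖ ^ 2)
        simp only [abs_mul, abs_two, show |(4 : ℝ)| = 4 by norm_num, abs_pow, abs_norm] at h₁ ⊢
        gcongr
        refine h₁.trans ?_
        gcongr
    _ = (4 * |F''| * ‖x‖ ^ 2 + 6 * |c|) * ‖x‖ * ‖u‖ ^ 2 := by ring

theorem hasFDerivAt_radialFDeriv_zero (hF : DifferentiableAt ℝ F 0) (hF' : ContinuousAt F' 0) :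
    HasFDerivAt (radialFDeriv F F') (0 : E →L[ℝ] E →L[ℝ] E) 0 := by
  have hsq : Tendsto (fun h : E ↦ ‖h‖ ^ 2) (𝓝 0) (𝓝 0) := by
    simpa using (tendsto_norm_zero (E := E)).pow 2
  have h₁ : (fun h : E ↦ (F (‖h‖ ^ 2) - F 0) • ContinuousLinearMap.id ℝ E) =O[𝓝 0]
      fun h ↦ ‖h‖ ^ 2 := by
    simpa using (hF.hasDerivAt.isBigO_sub.comp_tendsto hsq).smul
      (isBigO_const_const (ContinuousLinearMap.id ℝ E) (one_ne_zero' ℝ) (𝓝 (0 : E)))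
  have h₂ : (fun h : E ↦ (2 * F' (‖h‖ ^ 2)) • rankOne ℝ h h) =O[𝓝 0] fun h ↦ ‖h‖ ^ 2 := by
    simpa using ((hF'.tendsto.comp hsq).isBigO_one ℝ).const_mul_left 2 |>.smul
      (isBigO_of_le (𝓝 (0 : E)) (f := fun h : E ↦ rankOne ℝ h h)
        (g := fun h : E ↦ ‖h‖ ^ 2) fun h ↦ by simp [sq])
  rw [hasFDerivAt_iff_isLittleO_nhds_zero]
  refine IsBigO.trans_isLittleO ?_ (isLittleO_norm_pow_id one_lt_two)
  refine (h₁.add h₂).congr_left fun h ↦ ?_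
  simp only [radialFDeriv, zero_add, norm_zero, ne_eq, OfNat.ofNat_ne_zero, not_false_eq_true,
    zero_pow, map_zero, zero_apply, smul_zero, add_zero, sub_zero]
  module

end Radial

section InvOneAddRpow

noncomputable def invOneAddRpow (a s : ℝ) : ℝ := (1 + s ^ a)⁻¹

noncomputable def invOneAddRpowDeriv (a s : ℝ) : ℝ := -(a * s ^ (a - 1)) * invOneAddRpow a s ^ 2

noncomputable def invOneAddRpowDeriv2 (a s : ℝ) : ℝ :=
  a * invOneAddRpow a s ^ 2 * (2 * a * s ^ (2 * a - 2) * invOneAddRpow a s - (a - 1) * s ^ (a - 2))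

variable {a s : ℝ}

lemma invOneAddRpow_pos (hs : 0 ≤ s) : 0 < invOneAddRpow a s := by
  unfold invOneAddRpow; positivity

lemma rpow_mul_invOneAddRpow_le_one (hs : 0 ≤ s) : s ^ a * invOneAddRpow a s ≤ 1 := by
  rw [invOneAddRpow, ← div_eq_mul_inv, div_le_one (by positivity)]
  linarith

lemma invOneAddRpow_div_two_sq {δ r : ℝ} (hr : 0 ≤ r) :
    invOneAddRpow (δ / 2) (r ^ 2) = (1 + r ^ δ)⁻¹ := by
  rw [invOneAddRpow, Real.rpow_div_two_eq_sqrt _ (sq_nonneg r), Real.sqrt_sq hr]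

lemma hasDerivAt_invOneAddRpow (ha : 1 ≤ a) (hs : 0 ≤ s) :
    HasDerivAt (invOneAddRpow a) (invOneAddRpowDeriv a s) s := by
  refine (((Real.hasDerivAt_rpow_const (Or.inr ha)).const_add 1).inv
    (by positivity : 1 + s ^ a ≠ 0)).congr_deriv ?_
  rw [invOneAddRpowDeriv, invOneAddRpow, inv_pow, div_eq_mul_inv]

lemma continuousAt_invOneAddRpowDeriv_zero (ha : 1 ≤ a) :
    ContinuousAt (invOneAddRpowDeriv a) 0 := by
  have h₁ := Real.continuousAt_rpow_const 0 (a - 1) (Or.inr (by linarith))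
  have h₂ := Real.continuousAt_rpow_const 0 a (Or.inr (by linarith))
  exact (h₁.const_mul a).neg.mul
    (((h₂.const_add 1).inv₀ (by simp [Real.zero_rpow (by linarith : a ≠ 0)])).pow 2)

lemma hasDerivAt_invOneAddRpowDeriv (ha : 1 ≤ a) (hs : 0 < s) :
    HasDerivAt (invOneAddRpowDeriv a) (invOneAddRpowDeriv2 a s) s := by
  have h := (((Real.hasDerivAt_rpow_const (p := a - 1) (Or.inl hs.ne')).const_mul a).neg).mul
    ((hasDerivAt_invOneAddRpow ha hs.le).pow 2)
  refine h.congr_deriv ?_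
  rw [invOneAddRpowDeriv2, invOneAddRpowDeriv,
    show 2 * a - 2 = (a - 1) + (a - 1) by ring, Real.rpow_add hs, show a - 1 - 1 = a - 2 by ring]
  simp only [Pi.pow_apply, Pi.neg_apply, Nat.cast_ofNat, Nat.add_one_sub_one, pow_one]
  ring

lemma four_mul_abs_invOneAddRpowDeriv2_mul_add_le (ha : 1 ≤ a) (hs : 0 < s) :
    4 * |invOneAddRpowDeriv2 a s| * s + 6 * |invOneAddRpowDeriv a s|
      ≤ (12 * a ^ 2 + 2 * a) * (s ^ (a - 1) * invOneAddRpow a s ^ 2) := by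
  have hG := invOneAddRpow_pos (a := a) hs.le
  have hp : 0 ≤ s ^ (a - 1) := Real.rpow_nonneg hs.le _
  have hpG : s ^ (a - 1) * s * invOneAddRpow a s ≤ 1 := by
    rw [show s ^ (a - 1) * s = s ^ a by rw [Real.rpow_sub_one hs.ne', div_mul_cancel₀ _ hs.ne']]
    exact rpow_mul_invOneAddRpow_le_one hs.le
  have h₁ : s ^ (a - 2) * s = s ^ (a - 1) := by
    rw [show a - 1 = (a - 2) + 1 by ring, Real.rpow_add_one hs.ne']
  have h₂ : s ^ (2 * a - 2) * s = s ^ (a - 1) * (s ^ (a - 1) * s) := by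
    rw [show 2 * a - 2 = (a - 1) + (a - 1) by ring, Real.rpow_add hs]; ring
  have hD : |invOneAddRpowDeriv a s| = a * s ^ (a - 1) * invOneAddRpow a s ^ 2 := by
    rw [invOneAddRpowDeriv, abs_mul, abs_neg, abs_of_nonneg (by positivity),
      abs_of_nonneg (by positivity)]
  have hD2 : |invOneAddRpowDeriv2 a s| * s
      ≤ a * invOneAddRpow a s ^ 2 * (2 * a * s ^ (a - 1) + (a - 1) * s ^ (a - 1)) := by
    have he : invOneAddRpowDeriv2 a s * s = a * invOneAddRpow a s ^ 2 *
        (2 * a * s ^ (a - 1) * (s ^ (a - 1) * s * invOneAddRpow a s) - (a - 1) * s ^ (a - 1)) := by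
      rw [invOneAddRpowDeriv2]
      linear_combination (2 * a ^ 2 * invOneAddRpow a s ^ 3) * h₂
        - (a * (a - 1) * invOneAddRpow a s ^ 2) * h₁
    rw [show |invOneAddRpowDeriv2 a s| * s = |invOneAddRpowDeriv2 a s * s| by
      rw [abs_mul, abs_of_pos hs], he, abs_mul, abs_of_nonneg (by positivity)]
    gcongr
    refine (abs_sub _ _).trans ?_
    rw [abs_of_nonneg (by positivity), abs_of_nonneg (by nlinarith)]
    have := mul_le_mul_of_nonneg_left hpG (by positivity : 0 ≤ 2 * a * s ^ (a - 1))
    linarith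
  rw [hD]
  nlinarith

end InvOneAddRpow

lemma mul_rpow_sub_one_mul_inv_one_add_rpow_sq_le_min {C δ r : ℝ} (hC : 0 ≤ C) (hδ : 1 ≤ δ)
    (hr : 0 ≤ r) : C * (r ^ (δ - 1) * ((1 + r ^ δ)⁻¹) ^ 2) ≤ min C (C * r ^ (δ - 1)) := by
  have hpos : 0 < 1 + r ^ δ := by positivity
  have hG : (1 + r ^ δ)⁻¹ ≤ 1 := inv_le_one_of_one_le₀ (by simp [Real.rpow_nonneg hr])
  have hG2 : ((1 + r ^ δ)⁻¹) ^ 2 ≤ 1 := pow_le_one₀ (by positivity) hG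
  refine le_min (mul_le_of_le_one_right hC ?_)
    (by gcongr; exact mul_le_of_le_one_right (by positivity) hG2)
  rcases le_total r 1 with hr₁ | hr₁
  · exact mul_le_one₀ (Real.rpow_le_one hr hr₁ (by linarith)) (by positivity) hG2
  · calc r ^ (δ - 1) * ((1 + r ^ δ)⁻¹) ^ 2 ≤ (1 + r ^ δ) * (1 + r ^ δ)⁻¹ := by
          rw [sq]
          gcongr
          · linarith [Real.rpow_le_rpow_of_exponent_le hr₁ (by linarith : δ - 1 ≤ δ)]
          · exact mul_le_of_le_one_left (by positivity) hG
      _ = 1 := mul_inv_cancel₀ hpos.ne'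

theorem norm_fderiv_radialFDeriv_invOneAddRpow_apply_self_le {E : Type*} [NormedAddCommGroup E]
    [InnerProductSpace ℝ E] {δ : ℝ} (hδ : 2 ≤ δ) {x : E} (hx : x ≠ 0) (u : E) :
    ‖fderiv ℝ (radialFDeriv (invOneAddRpow (δ / 2)) (invOneAddRpowDeriv (δ / 2))) x u u‖
      ≤ (3 * δ ^ 2 + δ) * (‖x‖ ^ (δ - 1) * ((1 + ‖x‖ ^ δ)⁻¹) ^ 2) * ‖u‖ ^ 2 := by
  have ha : 1 ≤ δ / 2 := by linarith
  have hs : 0 < ‖x‖ ^ 2 := by positivity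
  have hpow : (‖x‖ ^ 2) ^ (δ / 2 - 1) * ‖x‖ = ‖x‖ ^ (δ - 1) := by
    rw [show δ / 2 - 1 = (δ - 2) / 2 by ring, Real.rpow_div_two_eq_sqrt _ (sq_nonneg _),
      Real.sqrt_sq (norm_nonneg x), ← Real.rpow_add_one (norm_ne_zero_iff.2 hx)]
    ring_nf
  calc _ ≤ _ := norm_fderiv_radialFDeriv_apply_self_le (hasDerivAt_invOneAddRpow ha hs.le)
          (hasDerivAt_invOneAddRpowDeriv ha hs) u
    _ ≤ (12 * (δ / 2) ^ 2 + 2 * (δ / 2))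
          * ((‖x‖ ^ 2) ^ (δ / 2 - 1) * invOneAddRpow (δ / 2) (‖x‖ ^ 2) ^ 2) * ‖x‖ * ‖u‖ ^ 2 := by
        gcongr
        exact four_mul_abs_invOneAddRpowDeriv2_mul_add_le ha hs
    _ = (3 * δ ^ 2 + δ) * (‖x‖ ^ (δ - 1) * ((1 + ‖x‖ ^ δ)⁻¹) ^ 2) * ‖u‖ ^ 2 := by
        rw [invOneAddRpow_div_two_sq (norm_nonneg x), ← hpow]
        ring

/-- For `ψ(x) = x (1 + |x|^δ)⁻¹` with `δ ≥ 2`, the second derivative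
satisfies `|ψ''(x)(u,u)| ≤ min(3δ² + δ, (3δ² + δ)|x|^{δ-1})` for all unit vectors `u`. -/
theorem stmt2 (d : ℕ) (δ : ℝ) (hδ : 2 ≤ δ)
    (ψ : EuclideanSpace ℝ (Fin d) → EuclideanSpace ℝ (Fin d))
    (hψ : ∀ x, ψ x = (1 + ‖x‖ ^ δ)⁻¹ • x) :
    ∀ x u : EuclideanSpace ℝ (Fin d), ‖u‖ = 1 →
      ‖iteratedFDeriv ℝ 2 ψ x ![u, u]‖
        ≤ min (3 * δ ^ 2 + δ) ((3 * δ ^ 2 + δ) * ‖x‖ ^ (δ - 1)) := by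
  intro x u hu
  have ha : 1 ≤ δ / 2 := by linarith
  have hψ' : ψ = fun y ↦ invOneAddRpow (δ / 2) (‖y‖ ^ 2) • y :=
    funext fun y ↦ by rw [hψ, invOneAddRpow_div_two_sq (norm_nonneg y)]
  have hC : 0 ≤ 3 * δ ^ 2 + δ := by positivity
  rw [iteratedFDeriv_two_apply, hψ', fderiv_radial fun s hs ↦ hasDerivAt_invOneAddRpow ha hs]
  simp only [Matrix.cons_val_zero, Matrix.cons_val_one]
  rcases eq_or_ne x 0 with rfl | hx
  · rw [(hasFDerivAt_radialFDeriv_zero (hasDerivAt_invOneAddRpow ha le_rfl).differentiableAt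
      (continuousAt_invOneAddRpowDeriv_zero ha)).fderiv]
    simp [Real.zero_rpow (by linarith : δ - 1 ≠ 0), hC]
  calc _ ≤ _ := norm_fderiv_radialFDeriv_invOneAddRpow_apply_self_le hδ hx u
    _ ≤ _ := by
      simpa [hu] using mul_rpow_sub_one_mul_inv_one_add_rpow_sq_le_min hC (by linarith)
        (norm_nonneg x)
end

section
/- Consider the linear-implicit Milstein iteration for the stochastic Lotka–Volterra model: given Y_{t_n} ∈ (ℝ^d)^+, define for each i, Y^(i)_{t_{n+1}} = Y^(i)_{t_n}·((1/2)(1 + Σ_{j=1}^m σ^(ij) ΔW^(j))² + 1/2)·(Q^(i))^{-1}, where Q^(i) = 1 − b^(i)h + h Σ_{j=1}^d a^(ij) Y^(j)_{t_n} + (h/2) Σ_{j=1}^m (σ^(ij))² and ΔW^(j) ∈ ℝ are arbitrary real increments. If all a^(ij) ≥ 0, min_i a^(ii) > 0, γ > 1, and 0 < h ≤ min_i 1/(γ·max(0, b^(i) − (1/2)Σ_j (σ^(ij))²)), then Y_{t_{n+1}} ∈ (ℝ^d)^+, i.e., the scheme preserves positivity. -/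
open scoped BigOperators

/-- Positivity preservation of the linear-implicit Milstein iteration for
the stochastic Lotka–Volterra model. -/
theorem stmt8 (d m : ℕ) (b : Fin d → ℝ) (A : Fin d → Fin d → ℝ)
    (σ : Fin d → Fin m → ℝ)
    (hA : ∀ i j, 0 ≤ A i j) (hdiag : ∀ i, 0 < A i i)
    (γ h : ℝ) (hγ : 1 < γ) (hh : 0 < h)
    (hstep : ∀ i, γ * max 0 (b i - (1 / 2) * ∑ j, (σ i j) ^ 2) * h ≤ 1)
    (Y : Fin d → ℝ) (hY : ∀ i, 0 < Y i)
    (ΔW : Fin m → ℝ)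
    (Q : Fin d → ℝ)
    (hQ : ∀ i, Q i = 1 - b i * h + h * ∑ j, A i j * Y j + (h / 2) * ∑ j, (σ i j) ^ 2)
    (Ynext : Fin d → ℝ)
    (hYnext : ∀ i, Ynext i
      = Y i * ((1 / 2) * (1 + ∑ j, σ i j * ΔW j) ^ 2 + 1 / 2) * (Q i)⁻¹) :
    ∀ i, 0 < Ynext i := by
  intro i
  have hM : 0 ≤ max 0 (b i - (1 / 2) * ∑ j, (σ i j) ^ 2) := le_max_left _ _
  have hγ0 : (0:ℝ) < γ := lt_trans one_pos hγ
  have h1 : max 0 (b i - (1 / 2) * ∑ j, (σ i j) ^ 2) * h < 1 := by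
    have := hstep i
    nlinarith [mul_nonneg hM hh.le]
  have h2 : (b i - (1 / 2) * ∑ j, (σ i j) ^ 2) * h < 1 :=
    lt_of_le_of_lt (mul_le_mul_of_nonneg_right (le_max_right _ _) hh.le) h1
  have hsum : 0 < ∑ j, A i j * Y j := by
    apply Finset.sum_pos' (fun j _ => mul_nonneg (hA i j) (hY j).le)
    exact ⟨i, Finset.mem_univ i, mul_pos (hdiag i) (hY i)⟩
  have hQpos : 0 < Q i := by
    rw [hQ i]
    nlinarith [mul_pos hh hsum]
  rw [hYnext i]
  have hfac : 0 < (1 / 2) * (1 + ∑ j, σ i j * ΔW j) ^ 2 + 1 / 2 := by positivity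
  exact mul_pos (mul_pos (hY i) hfac) (inv_pos.mpr hQpos)
end

section
/- Consider the stochastic Lotka–Volterra Lyapunov verification: let d, m ≥ 1, let A ∈ ℝ^{d×d} have nonnegative entries with ā := min_i a^(ii) > 0, let b̄ := max_i |b^(i)|, σ̄ := max_{i,j} |σ^(ij)|. Define U₀(x) = v(1+|x|²)^{1/2} and U₁(x) = v(1+|x|²)^{−1/2}(ā d^{−1/2} − vmσ̄²/2)|x|³ + v(1+|x|²)^{1/2} for v > 0 small enough that ā d^{−1/2} − vmσ̄²/2 > 0. Then for f(x) = diag(x)(b − Ax), g(x) = diag(x)σ, and α ≥ b̄ + mσ̄² + 1, for all x in the positive orthant (ℝ^d)^+: (A_{f,g}U₀)(x) + (1/2)|g(x)ᵀ∇U₀(x)|² + U₁(x) ≤ α·U₀(x). -/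
open scoped BigOperators

set_option maxHeartbeats 1600000 in
/-- Lyapunov verification for the stochastic Lotka–Volterra model on the
positive orthant, with `U₀(x) = v(1+|x|²)^{1/2}` and
`U₁(x) = v(1+|x|²)^{−1/2}(ā d^{−1/2} − vmσ̄²/2)|x|³ + v(1+|x|²)^{1/2}`:
`(A_{f,g}U₀)(x) + (1/2)|g(x)ᵀ∇U₀(x)|² + U₁(x) ≤ α U₀(x)` for
`α ≥ b̄ + mσ̄² + 1`.  The generator terms are written out explicitly. -/
theorem stmt17 (d m : ℕ) (hd : 1 ≤ d) (hm : 1 ≤ m)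
    (b : Fin d → ℝ) (A : Fin d → Fin d → ℝ) (σ : Fin d → Fin m → ℝ)
    (abar bbar sbar : ℝ)
    (hA : ∀ i j, 0 ≤ A i j) (habar : ∀ i, abar ≤ A i i) (habar0 : 0 < abar)
    (hbbar : ∀ i, |b i| ≤ bbar) (hsbar : ∀ i j, |σ i j| ≤ sbar)
    (v : ℝ) (hv : 0 < v)
    (hsmall : 0 < abar * (d : ℝ) ^ (-(1 : ℝ) / 2) - v * m * sbar ^ 2 / 2)
    (α : ℝ) (hα : bbar + m * sbar ^ 2 + 1 ≤ α)
    (x : Fin d → ℝ) (hx : ∀ i, 0 < x i) :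
    (∑ i, v * (Real.sqrt (1 + ∑ k, (x k) ^ 2))⁻¹ * (x i) ^ 2
          * (b i - ∑ j, A i j * x j))
      + (1 / 2) * ∑ i, ∑ k, v * (Real.sqrt (1 + ∑ l, (x l) ^ 2))⁻¹
          * (x i) ^ 2 * (σ i k) ^ 2
      - (1 / 2) * ∑ i, ∑ j, ∑ k, v * ((Real.sqrt (1 + ∑ l, (x l) ^ 2)) ^ 3)⁻¹
          * (x i) ^ 2 * (x j) ^ 2 * σ i k * σ j k
      + (1 / 2) * ∑ k, (∑ i, v * (Real.sqrt (1 + ∑ l, (x l) ^ 2))⁻¹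
          * (x i) ^ 2 * σ i k) ^ 2
      + (v * (Real.sqrt (1 + ∑ l, (x l) ^ 2))⁻¹
            * (abar * (d : ℝ) ^ (-(1 : ℝ) / 2) - v * m * sbar ^ 2 / 2)
            * (Real.sqrt (∑ l, (x l) ^ 2)) ^ 3
          + v * Real.sqrt (1 + ∑ l, (x l) ^ 2))
    ≤ α * (v * Real.sqrt (1 + ∑ l, (x l) ^ 2)) := by
  have i0 : Fin d := ⟨0, hd⟩
  have j0 : Fin m := ⟨0, hm⟩
  have hbb0 : 0 ≤ bbar := (abs_nonneg _).trans (hbbar i0)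
  have hsb0 : 0 ≤ sbar := (abs_nonneg _).trans (hsbar i0 j0)
  set S : ℝ := ∑ l, (x l) ^ 2 with hSdef
  have hS0 : 0 < S := by
    rw [hSdef]
    exact Finset.sum_pos (fun i _ => pow_pos (hx i) 2) ⟨i0, Finset.mem_univ i0⟩
  set r : ℝ := Real.sqrt (1 + S) with hrdef
  have hr0 : 0 < r := by rw [hrdef]; exact Real.sqrt_pos.mpr (by linarith)
  have hr2 : r ^ 2 = 1 + S := by rw [hrdef]; exact Real.sq_sqrt (by linarith)
  set q : ℝ := Real.sqrt S with hqdef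
  have hq0 : 0 ≤ q := by rw [hqdef]; exact Real.sqrt_nonneg _
  have hqpos : 0 < q := by rw [hqdef]; exact Real.sqrt_pos.mpr hS0
  have hq2 : q ^ 2 = S := by rw [hqdef]; exact Real.sq_sqrt hS0.le
  have hqr : q ≤ r := by rw [hqdef, hrdef]; exact Real.sqrt_le_sqrt (by linarith)
  clear_value S r q
  set e : ℝ := Real.sqrt (d : ℝ) with hedef
  have hdpos : (0:ℝ) < (d:ℝ) := by exact_mod_cast Nat.lt_of_lt_of_le Nat.zero_lt_one hd
  have he0 : 0 < e := by rw [hedef]; exact Real.sqrt_pos.mpr hdpos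
  have he2 : e ^ 2 = (d:ℝ) := by rw [hedef]; exact Real.sq_sqrt hdpos.le
  have hdinv : (d : ℝ) ^ (-(1 : ℝ) / 2) = e⁻¹ := by
    rw [hedef, Real.sqrt_eq_rpow, show (-(1:ℝ)/2) = -(1/2) by ring,
      Real.rpow_neg hdpos.le]
  clear_value e
  -- power mean: q^3 ≤ e * ∑ x_i^3
  set T : ℝ := ∑ i, (x i) ^ 3 with hTdef
  have hT0 : 0 ≤ T := Finset.sum_nonneg fun i _ => (pow_pos (hx i) 3).le
  set L : ℝ := ∑ i, x i with hLdef
  have hL0 : 0 ≤ L := Finset.sum_nonneg fun i _ => (hx i).le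
  clear_value T L
  have hL2 : L ^ 2 ≤ (d : ℝ) * S := by
    have h := Finset.sum_mul_sq_le_sq_mul_sq Finset.univ (fun _ => (1:ℝ)) x
    simpa [hLdef, hSdef] using h
  have hS2 : S ^ 2 ≤ L * T := by
    have h := Finset.sum_mul_sq_le_sq_mul_sq Finset.univ
      (fun i => Real.sqrt (x i)) (fun i => x i * Real.sqrt (x i))
    have h1 : ∀ i : Fin d, Real.sqrt (x i) * (x i * Real.sqrt (x i)) = x i ^ 2 := by
      intro i
      calc Real.sqrt (x i) * (x i * Real.sqrt (x i))
          = x i * (Real.sqrt (x i) * Real.sqrt (x i)) := by ring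
        _ = x i ^ 2 := by rw [Real.mul_self_sqrt (hx i).le]; ring
    have h2 : ∀ i : Fin d, (Real.sqrt (x i)) ^ 2 = x i := fun i => Real.sq_sqrt (hx i).le
    have h3 : ∀ i : Fin d, (x i * Real.sqrt (x i)) ^ 2 = x i ^ 3 := by
      intro i
      calc (x i * Real.sqrt (x i)) ^ 2
          = x i ^ 2 * (Real.sqrt (x i) * Real.sqrt (x i)) := by ring
        _ = x i ^ 3 := by rw [Real.mul_self_sqrt (hx i).le]; ring
    calc S ^ 2 = (∑ i, Real.sqrt (x i) * (x i * Real.sqrt (x i))) ^ 2 := by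
          rw [hSdef]; congr 1; exact Finset.sum_congr rfl fun i _ => (h1 i).symm
      _ ≤ (∑ i, (Real.sqrt (x i)) ^ 2) * ∑ i, (x i * Real.sqrt (x i)) ^ 2 := h
      _ = L * T := by
          rw [hLdef, hTdef]
          congr 1
          · exact Finset.sum_congr rfl fun i _ => h2 i
          · exact Finset.sum_congr rfl fun i _ => h3 i
  have hLe : L ≤ e * q := by
    nlinarith [hL2, he2, hq2, mul_nonneg he0.le hq0]
  have hq3T : q ^ 3 ≤ e * T := by
    have h4 : q ^ 4 ≤ e * q * T := by
      have := mul_le_mul_of_nonneg_right hLe hT0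
      nlinarith [hS2, hq2]
    nlinarith [h4, hqpos]
  have hcq : abar * (d : ℝ) ^ (-(1 : ℝ) / 2) * q ^ 3 ≤ abar * T := by
    rw [hdinv]
    have h := mul_le_mul_of_nonneg_left hq3T (by positivity : (0:ℝ) ≤ abar * e⁻¹)
    have he' : abar * e⁻¹ * (e * T) = abar * T := by
      field_simp
    linarith [h, he']
  -- named pieces
  set P1 : ℝ := ∑ i, (x i) ^ 2 * (b i - ∑ j, A i j * x j) with hP1def
  set P2 : ℝ := ∑ i, ∑ k, (x i) ^ 2 * (σ i k) ^ 2 with hP2def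
  set Q : ℝ := ∑ k, (∑ i, (x i) ^ 2 * σ i k) ^ 2 with hQdef
  -- bounds on pieces
  have hP1 : P1 ≤ bbar * S - abar * (d : ℝ) ^ (-(1 : ℝ) / 2) * q ^ 3 := by
    have hPa : (∑ i, (x i) ^ 2 * b i) ≤ bbar * S := by
      rw [hSdef, Finset.mul_sum]
      refine Finset.sum_le_sum fun i _ => ?_
      have hb : b i ≤ bbar := (le_abs_self _).trans (hbbar i)
      nlinarith [sq_nonneg (x i)]
    have hPb : abar * T ≤ ∑ i, (x i) ^ 2 * ∑ j, A i j * x j := by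
      rw [hTdef, Finset.mul_sum]
      refine Finset.sum_le_sum fun i _ => ?_
      have hsingle : A i i * x i ≤ ∑ j, A i j * x j :=
        Finset.single_le_sum (f := fun j => A i j * x j)
          (fun j _ => mul_nonneg (hA i j) (hx j).le) (Finset.mem_univ i)
      have h1 : abar * x i ≤ A i i * x i :=
        mul_le_mul_of_nonneg_right (habar i) (hx i).le
      have h2 : x i ^ 2 * (A i i * x i) ≤ x i ^ 2 * ∑ j, A i j * x j :=
        mul_le_mul_of_nonneg_left hsingle (sq_nonneg _)
      have h3 : x i ^ 2 * (abar * x i) ≤ x i ^ 2 * (A i i * x i) :=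
        mul_le_mul_of_nonneg_left h1 (sq_nonneg _)
      nlinarith [h2, h3]
    have hsplit : P1 = (∑ i, (x i) ^ 2 * b i) - ∑ i, (x i) ^ 2 * ∑ j, A i j * x j := by
      rw [hP1def, ← Finset.sum_sub_distrib]
      exact Finset.sum_congr rfl fun i _ => by ring
    linarith [hcq]
  have hP2 : P2 ≤ (m : ℝ) * sbar ^ 2 * S := by
    have hinner : ∀ i : Fin d, (∑ k, (x i) ^ 2 * (σ i k) ^ 2) ≤ (x i) ^ 2 * ((m:ℝ) * sbar ^ 2) := by
      intro i
      have : (∑ k, (x i) ^ 2 * (σ i k) ^ 2) ≤ ∑ _k : Fin m, (x i) ^ 2 * sbar ^ 2 := by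
        refine Finset.sum_le_sum fun k _ => ?_
        have hs : (σ i k) ^ 2 ≤ sbar ^ 2 := by
          have := hsbar i k
          nlinarith [abs_nonneg (σ i k), sq_abs (σ i k)]
        nlinarith [sq_nonneg (x i)]
      simpa [Finset.sum_const, Finset.card_univ, mul_comm, mul_left_comm, mul_assoc]
        using this
    calc P2 ≤ ∑ i, (x i) ^ 2 * ((m:ℝ) * sbar ^ 2) := by
          rw [hP2def]; exact Finset.sum_le_sum fun i _ => hinner i
      _ = (m : ℝ) * sbar ^ 2 * S := by
          rw [hSdef, ← Finset.sum_mul]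
          ring
  have hQ0 : 0 ≤ Q := Finset.sum_nonneg fun k _ => sq_nonneg _
  have hQ : Q ≤ (m : ℝ) * sbar ^ 2 * S ^ 2 := by
    have hk : ∀ k : Fin m, (∑ i, (x i) ^ 2 * σ i k) ^ 2 ≤ sbar ^ 2 * S ^ 2 := by
      intro k
      have h1 : |∑ i, (x i) ^ 2 * σ i k| ≤ sbar * S := by
        calc |∑ i, (x i) ^ 2 * σ i k| ≤ ∑ i, |(x i) ^ 2 * σ i k| :=
              Finset.abs_sum_le_sum_abs _ _
          _ ≤ ∑ i, (x i) ^ 2 * sbar := by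
              refine Finset.sum_le_sum fun i _ => ?_
              rw [abs_mul, abs_pow, sq_abs]
              exact mul_le_mul_of_nonneg_left (hsbar i k) (sq_nonneg _)
          _ = sbar * S := by rw [hSdef, ← Finset.sum_mul]; ring
      have h2 := pow_le_pow_left₀ (abs_nonneg _) h1 2
      rw [sq_abs] at h2
      nlinarith [h2]
    calc Q ≤ ∑ _k : Fin m, sbar ^ 2 * S ^ 2 := by
          rw [hQdef]; exact Finset.sum_le_sum fun k _ => hk k
      _ = (m : ℝ) * sbar ^ 2 * S ^ 2 := by
          simp [Finset.sum_const, Finset.card_univ, mul_assoc]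
  -- rewrite the goal sums in terms of P1, P2, Q
  have e1 : (∑ i, v * r⁻¹ * (x i) ^ 2 * (b i - ∑ j, A i j * x j)) = v * r⁻¹ * P1 := by
    rw [hP1def, Finset.mul_sum]
    exact Finset.sum_congr rfl fun i _ => by ring
  have e2 : (∑ i, ∑ k, v * r⁻¹ * (x i) ^ 2 * (σ i k) ^ 2) = v * r⁻¹ * P2 := by
    rw [hP2def, Finset.mul_sum]
    refine Finset.sum_congr rfl fun i _ => ?_
    rw [Finset.mul_sum]
    exact Finset.sum_congr rfl fun k _ => by ring
  have e3 : (∑ i, ∑ j, ∑ k, v * (r ^ 3)⁻¹ * (x i) ^ 2 * (x j) ^ 2 * σ i k * σ j k)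
      = v * (r ^ 3)⁻¹ * Q := by
    have key : (∑ i, ∑ j, ∑ k, (x i) ^ 2 * (x j) ^ 2 * σ i k * σ j k) = Q := by
      rw [hQdef]
      have : ∀ k : Fin m, (∑ i, (x i) ^ 2 * σ i k) ^ 2
          = ∑ i, ∑ j, (x i) ^ 2 * (x j) ^ 2 * σ i k * σ j k := by
        intro k
        rw [sq, Finset.sum_mul_sum]
        exact Finset.sum_congr rfl fun i _ => Finset.sum_congr rfl fun j _ => by ring
      rw [Finset.sum_congr rfl fun k _ => this k]
      conv_rhs => rw [Finset.sum_comm]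
      exact Finset.sum_congr rfl fun i _ => Finset.sum_comm
    rw [← key, Finset.mul_sum]
    refine Finset.sum_congr rfl fun i _ => ?_
    rw [Finset.mul_sum]
    refine Finset.sum_congr rfl fun j _ => ?_
    rw [Finset.mul_sum]
    exact Finset.sum_congr rfl fun k _ => by ring
  have e4 : (∑ k, (∑ i, v * r⁻¹ * (x i) ^ 2 * σ i k) ^ 2) = (v * r⁻¹) ^ 2 * Q := by
    rw [hQdef, Finset.mul_sum]
    refine Finset.sum_congr rfl fun k _ => ?_
    have : (∑ i, v * r⁻¹ * (x i) ^ 2 * σ i k) = v * r⁻¹ * ∑ i, (x i) ^ 2 * σ i k := by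
      rw [Finset.mul_sum]
      exact Finset.sum_congr rfl fun i _ => by ring
    rw [this, mul_pow]
  rw [e1, e2, e3, e4]
  -- work with u := r⁻¹
  clear_value P1 P2 Q
  set u : ℝ := r⁻¹ with hudef
  have hu0 : 0 < u := by rw [hudef]; exact inv_pos.mpr hr0
  have hur : u * r = 1 := by rw [hudef]; exact inv_mul_cancel₀ hr0.ne'
  have e5 : (r ^ 3)⁻¹ = u ^ 3 := by rw [hudef, inv_pow]
  rw [e5]
  clear_value u
  have huq : u * q ≤ 1 := by
    calc u * q ≤ u * r := mul_le_mul_of_nonneg_left hqr hu0.le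
      _ = 1 := hur
  have huS : u * S ≤ r := by
    have h1 : u * S ≤ u * r ^ 2 := mul_le_mul_of_nonneg_left (by linarith [hr2]) hu0.le
    have h2 : u * r ^ 2 = r := by rw [sq, ← mul_assoc, hur, one_mul]
    linarith
  have h7 : u ^ 2 * S ^ 2 ≤ u * q ^ 3 := by
    have hid : u ^ 2 * S ^ 2 = (u * q) * (u * q ^ 3) := by rw [← hq2]; ring
    rw [hid]
    calc (u * q) * (u * q ^ 3) ≤ 1 * (u * q ^ 3) :=
          mul_le_mul_of_nonneg_right huq (by positivity)
      _ = u * q ^ 3 := one_mul _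
  have hvu : (0:ℝ) ≤ v * u := by positivity
  have F1 := mul_le_mul_of_nonneg_left hP1 hvu
  have F2 := mul_le_mul_of_nonneg_left hP2 hvu
  have F3 : (0:ℝ) ≤ v * u ^ 3 * Q := by positivity
  have F4 := mul_le_mul_of_nonneg_left hQ (by positivity : (0:ℝ) ≤ v ^ 2 * u ^ 2)
  have F5 := mul_le_mul_of_nonneg_left h7
    (by positivity : (0:ℝ) ≤ v ^ 2 * ((m:ℝ) * sbar ^ 2))
  have F6 := mul_le_mul_of_nonneg_left huS (by positivity : (0:ℝ) ≤ v * bbar)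
  have F7 := mul_le_mul_of_nonneg_left huS
    (by positivity : (0:ℝ) ≤ v * ((m:ℝ) * sbar ^ 2))
  have F8 := mul_le_mul_of_nonneg_left hα (by positivity : (0:ℝ) ≤ v * r)
  have F9 : (0:ℝ) ≤ v * ((m:ℝ) * sbar ^ 2) * r := by positivity
  linarith [F1, F2, F3, F4, F5, F6, F7, F8, F9]
end

section
/- The moment recursion for the linear-implicit Milstein scheme: suppose Y^(i)_{n+1} = Y^(i)_n · R_n · (Q_n^(i))^{-1} where Y^(i)_n > 0, the random variables R_n := (1/2)(1 + Σ_j σ^(ij) ΔW_n^(j))² + 1/2 (with ΔW_n^(j) independent N(0,h) Gaussians, independent of Y_n), and (Q_n^(i))^{-1} ≤ 1 + Ch for a deterministic constant C. Then for every integer p ≥ 1 there is a constant C_p depending only on p, C, m, σ̄, T (with nh ≤ T) such that E[(Y^(i)_n)^p] ≤ C_p · (Y^(i)_0)^p for all 0 ≤ n ≤ N = T/h. -/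
/-!
Write `Iₖ = E[Yₖ^p]`. Since `Yₖ₊₁^p = (Yₖ Qₖ)^p Rₖ^p` with `Yₖ Qₖ` independent of `Rₖ`, we get
`Iₖ₊₁ ≤ (1 + C h)^p E[Rₖ^p] Iₖ`. The noise `S = Σⱼ σʲ ΔWʲ` is centred and sub-Gaussian with
variance proxy at most `m σ̄² h`, so all its even moments are `O(h)`; together with the
polynomial bound `R^p ≤ 1 + p S + K (S² + S^(2p+2))` this gives `E[R^p] ≤ 1 + c h`, and
iterating `n ≤ T / h` times yields `Iₙ ≤ e^((p C + c) T) y₀^p`.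

Neither `Yₖ` nor `Qₖ` is assumed measurable, so `Iₖ` is a lower Lebesgue integral. The
factorisation `E[F G] ≤ E[F] E[G]` is therefore proved for an arbitrary `F` independent of a
measurable `G`, by cutting `G` into layers of width `ε` and approximating `F` from below by
staircases built on measurable kernels of its level sets.
-/

open MeasureTheory ProbabilityTheory Set Real
open scoped ENNReal NNReal

namespace ENNReal

theorem exists_nat_mul_le_lt_succ_mul {ε x : ℝ≥0∞} (hε₀ : ε ≠ 0) (hε : ε ≠ ∞) (hx : x ≠ ∞) :
    ∃ i : ℕ, i * ε ≤ x ∧ x < (i + 1) * ε := by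
  lift ε to ℝ≥0 using hε
  lift x to ℝ≥0 using hx
  have hε₀' : 0 < ε := pos_iff_ne_zero.2 (by simpa using hε₀)
  refine ⟨⌊x / ε⌋₊, ?_, ?_⟩
  · exact_mod_cast (le_div_iff₀ hε₀').1 (Nat.floor_le (by positivity))
  · exact_mod_cast (div_lt_iff₀ hε₀').1 (Nat.lt_floor_add_one _)

/-- The staircase `ε ⌊x / ε⌋`, written as a sum of indicators so that it integrates termwise. -/
noncomputable def stair (ε x : ℝ≥0∞) : ℝ≥0∞ :=
  ∑' j : ℕ, {y : ℝ≥0∞ | (j + 1) * ε ≤ y}.indicator (fun _ => ε) x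

theorem stair_eq_of_le_of_lt {ε x : ℝ≥0∞} {i : ℕ} (hi : i * ε ≤ x) (hi' : x < (i + 1) * ε) :
    stair ε x = i * ε := by
  have hterm : ∀ j : ℕ, (j + 1) * ε ≤ x ↔ j ∈ Finset.range i := by
    intro j
    rw [Finset.mem_range]
    refine ⟨fun hj => ?_, fun hj => le_trans ?_ hi⟩
    · exact_mod_cast Nat.lt_of_succ_lt_succ
        (by exact_mod_cast lt_of_mul_lt_mul_right' (hj.trans_lt hi'))
    · gcongr
      exact_mod_cast hj
  rw [stair, tsum_eq_sum (s := Finset.range i) fun j hj =>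
    indicator_of_notMem (by simpa [hterm] using hj) _,
    Finset.sum_congr rfl fun j hj => indicator_of_mem (by simpa [hterm] using hj) _]
  simp

theorem stair_le {ε : ℝ≥0∞} (hε₀ : ε ≠ 0) (hε : ε ≠ ∞) (x : ℝ≥0∞) : stair ε x ≤ x := by
  rcases eq_or_ne x ∞ with rfl | hx
  · exact le_top
  obtain ⟨i, hi, hi'⟩ := exists_nat_mul_le_lt_succ_mul hε₀ hε hx
  rw [stair_eq_of_le_of_lt hi hi']
  exact hi

theorem le_add_stair {ε : ℝ≥0∞} (hε₀ : ε ≠ 0) (hε : ε ≠ ∞) (x : ℝ≥0∞) :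
    x ≤ ε + stair ε x := by
  rcases eq_or_ne x ∞ with rfl | hx
  · simp [stair, ENNReal.tsum_const_eq_top_of_ne_zero hε₀]
  obtain ⟨i, hi, hi'⟩ := exists_nat_mul_le_lt_succ_mul hε₀ hε hx
  rw [stair_eq_of_le_of_lt hi hi']
  exact hi'.le.trans_eq (by ring)

theorem lintegral_stair_comp {Ω : Type*} [MeasurableSpace Ω] {ν : Measure Ω} {f : Ω → ℝ≥0∞}
    (hf : Measurable f) (ε : ℝ≥0∞) :
    ∫⁻ ω, stair ε (f ω) ∂ν = ∑' j : ℕ, ε * ν {ω | (j + 1) * ε ≤ f ω} := by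
  refine (lintegral_tsum fun j => ?_).trans
    (tsum_congr fun j => lintegral_indicator_const (measurableSet_le measurable_const hf) ε)
  exact ((measurable_const.indicator (measurableSet_le measurable_const measurable_id)).comp
    hf).aemeasurable

end ENNReal

section IndependentLowerIntegral

variable {Ω : Type*} [MeasurableSpace Ω] {μ : Measure Ω} [IsProbabilityMeasure μ]

theorem setLIntegral_le_measure_mul_lintegral_of_indep {F : Ω → ℝ≥0∞} {A : Set Ω}
    (hA : MeasurableSet A)
    (hFA : ∀ B : Set ℝ≥0∞, MeasurableSet B → μ (F ⁻¹' B ∩ A) = μ (F ⁻¹' B) * μ A) :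
    ∫⁻ ω in A, F ω ∂μ ≤ μ A * ∫⁻ ω, F ω ∂μ := by
  refine ENNReal.le_of_forall_pos_le_add fun δ hδ _ => ?_
  set ε : ℝ≥0∞ := (δ : ℝ≥0∞)
  have hε₀ : ε ≠ 0 := by simpa [ε] using hδ.ne'
  have hε : ε ≠ ∞ := ENNReal.coe_ne_top
  obtain ⟨f, hf, hfF, hF⟩ := exists_measurable_le_lintegral_eq (μ.restrict A) F
  -- Independence only controls the outer measure of `{F < t}`, hence this measurable kernel
  -- of `{t ≤ F}`.
  set U : ℝ≥0∞ → Set Ω := fun t => (toMeasurable μ (F ⁻¹' Iio t))ᶜ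
  have hU : ∀ t, MeasurableSet (U t) := fun t => (measurableSet_toMeasurable _ _).compl
  have hUF : ∀ t, U t ⊆ F ⁻¹' {y | t ≤ y} := fun t ω hω =>
    show t ≤ F ω from not_lt.1 fun h => hω (subset_toMeasurable _ _ h)
  have hμU : ∀ t, μ (U t) = 1 - μ (F ⁻¹' Iio t) := fun t => by
    rw [prob_compl_eq_one_sub (measurableSet_toMeasurable _ _), measure_toMeasurable]
  have hlevel : ∀ t, μ ({ω | t ≤ f ω} ∩ A) ≤ μ A * μ (U t) := by
    intro t
    have hdisj : Disjoint ({ω | t ≤ f ω} ∩ A) (F ⁻¹' Iio t ∩ A) :=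
      disjoint_left.2 fun ω h h' => (h.1.trans (hfF ω)).not_gt h'.1
    have hsum : μ ({ω | t ≤ f ω} ∩ A) + μ A * μ (F ⁻¹' Iio t) ≤ μ A := by
      rw [mul_comm, ← hFA _ measurableSet_Iio,
        ← measure_union' hdisj ((measurableSet_le measurable_const hf).inter hA)]
      exact measure_mono (union_subset inter_subset_right inter_subset_right)
    rw [hμU, ENNReal.mul_sub fun _ _ => measure_ne_top _ _, mul_one]
    exact ENNReal.le_sub_of_add_le_right
      (ENNReal.mul_ne_top (measure_ne_top _ _) (measure_ne_top _ _)) hsum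
  calc ∫⁻ ω in A, F ω ∂μ = ∫⁻ ω in A, f ω ∂μ := hF
    _ ≤ ∫⁻ ω in A, ε + ENNReal.stair ε (f ω) ∂μ :=
      lintegral_mono fun ω => ENNReal.le_add_stair hε₀ hε _
    _ = ε * μ A + ∑' j : ℕ, ε * μ ({ω | (j + 1) * ε ≤ f ω} ∩ A) := by
      rw [lintegral_add_left measurable_const, ENNReal.lintegral_stair_comp hf]
      simp [Measure.restrict_apply (measurableSet_le measurable_const hf)]
    _ ≤ ε + ∑' j : ℕ, ε * (μ A * μ (U ((j + 1) * ε))) := by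
      gcongr
      · exact mul_le_of_le_one_right' prob_le_one
      · exact hlevel _
    _ = ε + μ A * ∫⁻ ω, ∑' j : ℕ, (U ((j + 1) * ε)).indicator (fun _ => ε) ω ∂μ := by
      rw [lintegral_tsum fun j => (measurable_const.indicator (hU _)).aemeasurable,
        ← ENNReal.tsum_mul_left]
      simp_rw [lintegral_indicator_const (hU _)]
      congr 1
      exact tsum_congr fun j => by ring
    _ ≤ ε + μ A * ∫⁻ ω, ENNReal.stair ε (F ω) ∂μ := by
      gcongr with ω
      exact ENNReal.tsum_le_tsum fun j =>
        indicator_le_indicator_of_subset (f := fun _ : Ω => ε) (hUF _) (fun _ => zero_le) ω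
    _ ≤ μ A * ∫⁻ ω, F ω ∂μ + ε := by
      rw [add_comm]
      gcongr with ω
      exact ENNReal.stair_le hε₀ hε _

theorem lintegral_mul_le_add_mul_of_indepFun {F G : Ω → ℝ≥0∞} (hG : Measurable G)
    (hG_ne_top : ∀ ω, G ω ≠ ∞) (hFG : IndepFun F G μ) {ε : ℝ≥0∞} (hε₀ : ε ≠ 0)
    (hε : ε ≠ ∞) :
    ∫⁻ ω, F ω * G ω ∂μ ≤ (∫⁻ ω, G ω ∂μ + ε) * ∫⁻ ω, F ω ∂μ := by
  set A : ℕ → Set Ω := fun i => G ⁻¹' Ico (i * ε) ((i + 1 : ℕ) * ε)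
  have hA : ∀ i, MeasurableSet (A i) := fun i => hG measurableSet_Ico
  have hmono : Monotone fun i : ℕ => (i : ℝ≥0∞) * ε := fun i j h =>
    mul_le_mul_left (Nat.cast_le.2 h) ε
  have hA_disj : Pairwise (Function.onFun Disjoint A) := fun i j hij =>
    (hmono.pairwise_disjoint_on_Ico_succ hij).preimage G
  have hA_univ : ⋃ i, A i = univ := eq_univ_of_forall fun ω => mem_iUnion.2 <| by
    obtain ⟨i, hi⟩ := ENNReal.exists_nat_mul_le_lt_succ_mul hε₀ hε (hG_ne_top ω)
    exact ⟨i, by simpa [A] using hi⟩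
  have hindep : ∀ i B, MeasurableSet B → μ (F ⁻¹' B ∩ A i) = μ (F ⁻¹' B) * μ (A i) :=
    fun i B hB => indepFun_iff_measure_inter_preimage_eq_mul.1 hFG B _ hB measurableSet_Ico
  calc ∫⁻ ω, F ω * G ω ∂μ ≤ ∑' i, ∫⁻ ω in A i, F ω * G ω ∂μ := by
        simpa [hA_univ] using lintegral_iUnion_le A (fun ω => F ω * G ω) (μ := μ)
    _ ≤ ∑' i, (∫⁻ ω in A i, F ω ∂μ) * ((i + 1 : ℕ) * ε) := by
        gcongr with i
        rw [← lintegral_mul_const' _ _ (ENNReal.mul_ne_top (ENNReal.natCast_ne_top _) hε)]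
        exact setLIntegral_mono' (hA i) fun ω hω => by gcongr; exact hω.2.le
    _ ≤ ∑' i, μ (A i) * (∫⁻ ω, F ω ∂μ) * ((i + 1 : ℕ) * ε) := by
        gcongr with i
        exact setLIntegral_le_measure_mul_lintegral_of_indep (hA i) (hindep i)
    _ = (∑' i, ∫⁻ _ in A i, (i + 1 : ℕ) * ε ∂μ) * ∫⁻ ω, F ω ∂μ := by
        rw [← ENNReal.tsum_mul_right]
        exact tsum_congr fun i => by rw [setLIntegral_const]; ring
    _ ≤ (∑' i, ∫⁻ ω in A i, G ω + ε ∂μ) * ∫⁻ ω, F ω ∂μ := by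
        refine mul_le_mul_left (ENNReal.tsum_le_tsum fun i =>
          setLIntegral_mono' (hA i) fun ω hω => ?_) _
        calc ((i + 1 : ℕ) : ℝ≥0∞) * ε = i * ε + ε := by push_cast; ring
          _ ≤ G ω + ε := by gcongr; exact hω.1
    _ = (∫⁻ ω, G ω ∂μ + ε) * ∫⁻ ω, F ω ∂μ := by
        rw [← lintegral_iUnion hA hA_disj, hA_univ, setLIntegral_univ,
          lintegral_add_right _ measurable_const]
        simp

open Filter Topology in
theorem lintegral_mul_le_of_indepFun {F G : Ω → ℝ≥0∞} (hG : Measurable G)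
    (hG_ne_top : ∀ ω, G ω ≠ ∞) (hFG : IndepFun F G μ) :
    ∫⁻ ω, F ω * G ω ∂μ ≤ (∫⁻ ω, F ω ∂μ) * ∫⁻ ω, G ω ∂μ := by
  rcases eq_or_ne (∫⁻ ω, G ω ∂μ) 0 with hG₀ | hG₀
  · have hFG₀ : (fun ω => F ω * G ω) =ᵐ[μ] 0 := by
      filter_upwards [(lintegral_eq_zero_iff hG).1 hG₀] with ω hω
      simp [hω]
    simp [lintegral_congr_ae hFG₀]
  have hlim : Tendsto (fun ε : ℝ≥0 => (∫⁻ ω, G ω ∂μ + ε) * ∫⁻ ω, F ω ∂μ) (𝓝[>] 0)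
      (𝓝 ((∫⁻ ω, G ω ∂μ) * ∫⁻ ω, F ω ∂μ)) := by
    refine ENNReal.Tendsto.mul_const (tendsto_nhdsWithin_of_tendsto_nhds ?_) (Or.inl hG₀)
    simpa using tendsto_const_nhds.add (ENNReal.continuous_coe.tendsto 0)
  rw [mul_comm]
  refine ge_of_tendsto hlim (eventually_nhdsWithin_of_forall fun ε (hε : 0 < ε) => ?_)
  exact lintegral_mul_le_add_mul_of_indepFun hG hG_ne_top hFG (by simpa using hε.ne')
    ENNReal.coe_ne_top

theorem lintegral_ofReal_pow_mul_mul_le {Y Q R : Ω → ℝ} {q : ℝ} (p : ℕ) (hY : ∀ ω, 0 ≤ Y ω)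
    (hQ : ∀ ω, 0 ≤ Q ω ∧ Q ω ≤ q) (hR : Measurable R)
    (hYQR : IndepFun (fun ω => Y ω * Q ω) R μ) :
    ∫⁻ ω, .ofReal ((Y ω * R ω * Q ω) ^ p) ∂μ ≤
      .ofReal (q ^ p) * (∫⁻ ω, .ofReal (Y ω ^ p) ∂μ) * ∫⁻ ω, .ofReal (R ω ^ p) ∂μ := by
  have hφ : Measurable fun x : ℝ => ENNReal.ofReal (x ^ p) := by fun_prop
  have hYQ : ∀ ω, 0 ≤ Y ω * Q ω := fun ω => mul_nonneg (hY ω) (hQ ω).1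
  calc ∫⁻ ω, .ofReal ((Y ω * R ω * Q ω) ^ p) ∂μ
      = ∫⁻ ω, .ofReal ((Y ω * Q ω) ^ p) * .ofReal (R ω ^ p) ∂μ := by
        refine lintegral_congr fun ω => ?_
        rw [← ENNReal.ofReal_mul (pow_nonneg (hYQ ω) p), ← mul_pow, mul_right_comm]
    _ ≤ (∫⁻ ω, .ofReal ((Y ω * Q ω) ^ p) ∂μ) * ∫⁻ ω, .ofReal (R ω ^ p) ∂μ :=
        lintegral_mul_le_of_indepFun (hφ.comp hR) (fun _ => ENNReal.ofReal_ne_top)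
          (hYQR.comp hφ hφ)
    _ ≤ (∫⁻ ω, .ofReal (q ^ p) * .ofReal (Y ω ^ p) ∂μ) * ∫⁻ ω, .ofReal (R ω ^ p) ∂μ := by
        gcongr with ω
        rw [← ENNReal.ofReal_mul (pow_nonneg ((hQ ω).1.trans (hQ ω).2) p), ← mul_pow,
          mul_comm q]
        gcongr
        exacts [hYQ ω, hY ω, (hQ ω).2]
    _ = _ := by rw [lintegral_const_mul' _ _ ENNReal.ofReal_ne_top]

end IndependentLowerIntegral

theorem pow_two_mul_le_factorial_div_mul_exp_add_exp (x : ℝ) {t : ℝ} (ht : 0 < t) (k : ℕ) :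
    x ^ (2 * k) ≤ (2 * k).factorial / t ^ (2 * k) * (exp (t * x) + exp (-t * x)) := by
  have hexp : (t * |x|) ^ (2 * k) / (2 * k).factorial ≤ exp (t * x) + exp (-t * x) := by
    refine (pow_div_factorial_le_exp _ (by positivity) _).trans ?_
    rcases abs_cases x with ⟨hx, -⟩ | ⟨hx, -⟩ <;> rw [hx]
    · linarith [exp_pos (-t * x)]
    · rw [mul_neg, ← neg_mul]
      linarith [exp_pos (t * x)]
  have hpow : x ^ (2 * k) = (2 * k).factorial / t ^ (2 * k) *
      ((t * |x|) ^ (2 * k) / (2 * k).factorial) := by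
    rw [mul_pow, (even_two_mul k).pow_abs]
    field_simp
  rw [hpow]
  gcongr

theorem ProbabilityTheory.HasSubgaussianMGF.integral_pow_two_mul_le {Ω : Type*}
    [MeasurableSpace Ω] {μ : Measure Ω} {X : Ω → ℝ} {c : ℝ≥0} (hX : HasSubgaussianMGF X c μ)
    (k : ℕ) {h : ℝ} (hh : 0 < h) :
    Integrable (fun ω => X ω ^ (2 * k)) μ ∧
      ∫ ω, X ω ^ (2 * k) ∂μ ≤ (2 * k).factorial * h ^ k * (2 * exp (c / (2 * h))) := by
  set t := (√h)⁻¹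
  have ht : 0 < t := inv_pos.2 (sqrt_pos.2 hh)
  have ht2 : t ^ 2 = h⁻¹ := by rw [inv_pow, sq_sqrt hh.le]
  have hexp : Integrable (fun ω => exp (t * X ω) + exp (-t * X ω)) μ :=
    (hX.integrable_exp_mul t).add (hX.integrable_exp_mul (-t))
  have hbound := fun ω => pow_two_mul_le_factorial_div_mul_exp_add_exp (X ω) ht k
  have hint : Integrable (fun ω => X ω ^ (2 * k)) μ :=
    (hexp.const_mul _).mono' (hX.aestronglyMeasurable.pow _) <| ae_of_all _ fun ω => by
      rw [Real.norm_of_nonneg ((even_two_mul k).pow_nonneg _)]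
      exact hbound ω
  refine ⟨hint, (integral_mono hint (hexp.const_mul _) hbound).trans ?_⟩
  rw [integral_const_mul, integral_add (hX.integrable_exp_mul t) (hX.integrable_exp_mul (-t))]
  have hmgf := add_le_add (hX.mgf_le t) (hX.mgf_le (-t))
  rw [mgf, mgf, neg_sq, ht2] at hmgf
  have hfac : ((2 * k).factorial : ℝ) / t ^ (2 * k) = (2 * k).factorial * h ^ k := by
    rw [pow_mul, ht2, inv_pow, div_inv_eq_mul]
  rw [hfac]
  gcongr
  convert hmgf using 1
  field_simp
  ring

section Gaussian

variable {Ω : Type*} [MeasurableSpace Ω] {μ : Measure Ω} {X : Ω → ℝ} {v : ℝ≥0}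

theorem hasSubgaussianMGF_of_map_eq_gaussianReal [IsProbabilityMeasure μ]
    (hX : μ.map X = gaussianReal 0 v) : HasSubgaussianMGF X v μ where
  integrable_exp_mul t := by
    rw [← mgf_pos_iff, mgf_gaussianReal hX]
    exact exp_pos _
  mgf_le t := by simp [mgf_gaussianReal hX]

theorem integral_eq_zero_of_map_eq_gaussianReal (hX : μ.map X = gaussianReal 0 v) :
    ∫ ω, X ω ∂μ = 0 := by
  have hXm : AEMeasurable X μ := aemeasurable_of_map_neZero (by rw [hX]; infer_instance)
  calc ∫ ω, X ω ∂μ = ∫ x, x ∂(μ.map X) := (integral_map hXm aestronglyMeasurable_id).symm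
    _ = 0 := by rw [hX, integral_id_gaussianReal]

end Gaussian

theorem exists_pow_le_one_add_mul_add_sq {B : ℝ} (hB : 0 ≤ B) (p : ℕ) :
    ∃ c : ℝ, 0 ≤ c ∧ ∀ x ∈ Icc 0 B, x ^ p ≤ 1 + p * (x - 1) + c * (x - 1) ^ 2 := by
  induction p with
  | zero => exact ⟨0, le_rfl, fun x _ => by simp⟩
  | succ p ih =>
    obtain ⟨c, hc, hxc⟩ := ih
    refine ⟨p + c * B, by positivity, fun x hx => ?_⟩
    have hcx : c * x * (x - 1) ^ 2 ≤ c * B * (x - 1) ^ 2 := by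
      gcongr
      exact hx.2
    calc x ^ (p + 1) = x * x ^ p := by ring
      _ ≤ x * (1 + p * (x - 1) + c * (x - 1) ^ 2) := by gcongr; exacts [hx.1, hxc x hx]
      _ = 1 + (p + 1) * (x - 1) + p * (x - 1) ^ 2 + c * x * (x - 1) ^ 2 := by ring
      _ ≤ 1 + ((p + 1 : ℕ) : ℝ) * (x - 1) + (p + c * B) * (x - 1) ^ 2 := by push_cast; linarith

/-- The factor `Rₙ` of the scheme as a function of `s = Σⱼ σʲ ΔWₙʲ`. -/
noncomputable def milsteinFactor (s : ℝ) : ℝ := 1 / 2 * (1 + s) ^ 2 + 1 / 2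

theorem milsteinFactor_nonneg (s : ℝ) : 0 ≤ milsteinFactor s := by
  unfold milsteinFactor
  positivity

theorem exists_milsteinFactor_pow_le (p : ℕ) :
    ∃ K : ℝ, 0 ≤ K ∧ ∀ s : ℝ,
      milsteinFactor s ^ p ≤ 1 + p * s + K * (s ^ 2 + s ^ (2 * (p + 1))) := by
  obtain ⟨c, hc, hxc⟩ := exists_pow_le_one_add_mul_add_sq (B := 5 / 2) (by norm_num) p
  refine ⟨p + 3 * c + (5 / 2) ^ p, by positivity, fun s => ?_⟩
  have hR₀ := milsteinFactor_nonneg s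
  have hP : 0 ≤ s ^ (2 * (p + 1)) := (even_two_mul _).pow_nonneg s
  have hp : (0 : ℝ) ≤ p := Nat.cast_nonneg p
  have h5 : (0 : ℝ) ≤ (5 / 2) ^ p := by positivity
  have hcP := mul_nonneg hc hP
  have hpP := mul_nonneg hp hP
  have h5s := mul_nonneg h5 (sq_nonneg s)
  rcases le_total |s| 1 with hs | hs
  · have hs' := abs_le.1 hs
    have hRB : milsteinFactor s ≤ 5 / 2 := by unfold milsteinFactor; nlinarith
    have hsq : c * (s + s ^ 2 / 2) ^ 2 ≤ c * (3 * s ^ 2) := by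
      rw [show (s + s ^ 2 / 2) ^ 2 = (1 + s / 2) ^ 2 * s ^ 2 by ring]
      gcongr
      nlinarith
    have hxs := hxc _ ⟨hR₀, hRB⟩
    rw [show milsteinFactor s - 1 = s + s ^ 2 / 2 by unfold milsteinFactor; ring] at hxs
    nlinarith [mul_nonneg hp (sq_nonneg s), mul_nonneg h5 hP]
  · have hs1 : 1 ≤ s ^ 2 := by nlinarith [sq_abs s, abs_nonneg s]
    have hss : 0 ≤ p * (s + s ^ 2) := mul_nonneg hp (by nlinarith [neg_abs_le s, sq_abs s])
    have hRs : milsteinFactor s ≤ 5 / 2 * s ^ 2 := by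
      unfold milsteinFactor
      nlinarith [le_abs_self s]
    have hRp : milsteinFactor s ^ p ≤ (5 / 2) ^ p * s ^ (2 * (p + 1)) := by
      calc milsteinFactor s ^ p ≤ (5 / 2 * s ^ 2) ^ p := pow_le_pow_left₀ hR₀ hRs p
        _ = (5 / 2) ^ p * s ^ (2 * p) := by rw [mul_pow, pow_mul]
        _ ≤ (5 / 2) ^ p * s ^ (2 * (p + 1)) := by
          refine mul_le_mul_of_nonneg_left ?_ h5
          rw [show 2 * (p + 1) = 2 * p + 2 by ring, pow_add]
          exact le_mul_of_one_le_right ((even_two_mul p).pow_nonneg s) hs1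
    nlinarith [mul_nonneg hc (sq_nonneg s)]

theorem lintegral_milsteinFactor_pow_le {Ω : Type*} [MeasurableSpace Ω] {μ : Measure Ω}
    [IsProbabilityMeasure μ] {S : Ω → ℝ} {c : ℝ≥0} (hS : HasSubgaussianMGF S c μ)
    (hS₀ : ∫ ω, S ω ∂μ = 0) {p : ℕ} {K : ℝ} (hK₀ : 0 ≤ K)
    (hK : ∀ s, milsteinFactor s ^ p ≤ 1 + p * s + K * (s ^ 2 + s ^ (2 * (p + 1))))
    {h : ℝ} (hh : 0 < h) :
    ∫⁻ ω, .ofReal (milsteinFactor (S ω) ^ p) ∂μ ≤ .ofReal (1 + K * (2 * exp (c / (2 * h))) *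
      (2 * h + (2 * (p + 1)).factorial * h ^ (p + 1))) := by
  obtain ⟨hS2, hS2_le⟩ := hS.integral_pow_two_mul_le 1 hh
  obtain ⟨hSp, hSp_le⟩ := hS.integral_pow_two_mul_le (p + 1) hh
  simp only [mul_one, pow_one, Nat.factorial_two, Nat.cast_ofNat] at hS2 hS2_le
  have h₁ : Integrable (fun ω => 1 + p * S ω) μ :=
    (integrable_const _).add (hS.integrable.const_mul _)
  have h₂ : Integrable (fun ω => K * (S ω ^ 2 + S ω ^ (2 * (p + 1)))) μ :=
    (hS2.add hSp).const_mul _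
  have hg : Integrable (fun ω => 1 + p * S ω + K * (S ω ^ 2 + S ω ^ (2 * (p + 1)))) μ :=
    h₁.add h₂
  calc ∫⁻ ω, .ofReal (milsteinFactor (S ω) ^ p) ∂μ
      ≤ ∫⁻ ω, .ofReal (1 + p * S ω + K * (S ω ^ 2 + S ω ^ (2 * (p + 1)))) ∂μ :=
        lintegral_mono fun ω => ENNReal.ofReal_le_ofReal (hK _)
    _ = .ofReal (1 + p * ∫ ω, S ω ∂μ +
          K * (∫ ω, S ω ^ 2 ∂μ + ∫ ω, S ω ^ (2 * (p + 1)) ∂μ)) := by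
        rw [← ofReal_integral_eq_lintegral_ofReal hg (ae_of_all _ fun ω =>
          (pow_nonneg (milsteinFactor_nonneg _) p).trans (hK _)), integral_add h₁ h₂,
          integral_add (integrable_const _) (hS.integrable.const_mul _), integral_const_mul,
          integral_const_mul, integral_add hS2 hSp]
        simp
    _ ≤ _ := by
        refine ENNReal.ofReal_le_ofReal ?_
        rw [hS₀, mul_zero, add_zero]
        linarith [mul_le_mul_of_nonneg_left (add_le_add hS2_le hSp_le) hK₀]

theorem exists_lintegral_milsteinFactor_pow_le (p m : ℕ) (sbar : ℝ) {T : ℝ} (hT : 0 ≤ T) :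
    ∃ c : ℝ, 0 ≤ c ∧ ∀ {Ω : Type*} [MeasurableSpace Ω] (μ : Measure Ω) [IsProbabilityMeasure μ]
      (h : ℝ), 0 < h → h ≤ T → ∀ σ : Fin m → ℝ, (∀ j, |σ j| ≤ sbar) →
      ∀ X : Fin m → Ω → ℝ, (∀ j, μ.map (X j) = gaussianReal 0 h.toNNReal) → iIndepFun X μ →
      ∫⁻ ω, .ofReal (milsteinFactor (∑ j, σ j * X j ω) ^ p) ∂μ ≤ .ofReal (1 + c * h) := by
  obtain ⟨K, hK₀, hK⟩ := exists_milsteinFactor_pow_le p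
  refine ⟨K * (2 * exp (m * sbar ^ 2 / 2)) * (2 + (2 * (p + 1)).factorial * T ^ p),
    by positivity, fun μ _ h hh hhT σ hσ X hX hXind => ?_⟩
  have hXσ : ∀ j, HasSubgaussianMGF (fun ω => σ j * X j ω)
      (⟨σ j ^ 2, sq_nonneg _⟩ * h.toNNReal) μ :=
    fun j => (hasSubgaussianMGF_of_map_eq_gaussianReal (hX j)).const_mul (σ j)
  have hS := HasSubgaussianMGF.sum_of_iIndepFun (s := Finset.univ)
    (hXind.comp (fun j x => σ j * x) fun j => measurable_const_mul (σ j)) fun j _ => hXσ j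
  have hS₀ : ∫ ω, ∑ j, σ j * X j ω ∂μ = 0 := by
    rw [integral_finsetSum _ fun j _ => (hXσ j).integrable]
    simp [integral_const_mul, integral_eq_zero_of_map_eq_gaussianReal (hX _)]
  refine (lintegral_milsteinFactor_pow_le hS hS₀ hK₀ hK hh).trans (ENNReal.ofReal_le_ofReal ?_)
  have hvar : ((∑ j, ⟨σ j ^ 2, sq_nonneg _⟩ * h.toNNReal : ℝ≥0) : ℝ) / (2 * h) ≤
      m * sbar ^ 2 / 2 := by
    have hσ2 : ∑ j, σ j ^ 2 ≤ m * sbar ^ 2 := by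
      calc ∑ j, σ j ^ 2 ≤ ∑ _j : Fin m, sbar ^ 2 :=
            Finset.sum_le_sum fun j _ => sq_abs (σ j) ▸ pow_le_pow_left₀ (abs_nonneg _) (hσ j) 2
        _ = m * sbar ^ 2 := by simp
    have hc : ((∑ j, ⟨σ j ^ 2, sq_nonneg _⟩ * h.toNNReal : ℝ≥0) : ℝ) = (∑ j, σ j ^ 2) * h := by
      rw [NNReal.coe_sum, Finset.sum_mul]
      refine Finset.sum_congr rfl fun j _ => ?_
      change σ j ^ 2 * (h.toNNReal : ℝ) = _
      rw [Real.coe_toNNReal _ hh.le]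
    rw [hc]
    field_simp
    linarith
  have hpow : 2 * h + (2 * (p + 1)).factorial * h ^ (p + 1) ≤
      (2 + (2 * (p + 1)).factorial * T ^ p) * h := by
    have : h ^ (p + 1) ≤ T ^ p * h := by
      rw [pow_succ]
      gcongr
    nlinarith [Nat.cast_nonneg (α := ℝ) (2 * (p + 1)).factorial]
  calc _ ≤ 1 + K * (2 * exp (m * sbar ^ 2 / 2)) *
        ((2 + (2 * (p + 1)).factorial * T ^ p) * h) := by gcongr
    _ = _ := by ring

theorem le_pow_mul_of_succ_le_mul {a : ℕ → ℝ≥0∞} {b : ℝ≥0∞} {N : ℕ}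
    (h : ∀ k < N, a (k + 1) ≤ b * a k) : ∀ k ≤ N, a k ≤ b ^ k * a 0 := by
  intro k hk
  induction k with
  | zero => simp
  | succ k ih =>
    calc a (k + 1) ≤ b * a k := h k hk
      _ ≤ b * (b ^ k * a 0) := by gcongr; exact ih (by omega)
      _ = b ^ (k + 1) * a 0 := by ring

theorem lintegral_ofReal_pow_le_of_recursion {Ω : Type*} [MeasurableSpace Ω] {μ : Measure Ω}
    [IsProbabilityMeasure μ] {Y Q R : ℕ → Ω → ℝ} {y₀ q ρ : ℝ} {N : ℕ} (p : ℕ) (hy₀ : 0 ≤ y₀)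
    (hY₀ : ∀ ω, Y 0 ω = y₀) (hY : ∀ k ω, Y (k + 1) ω = Y k ω * R k ω * Q k ω)
    (hR₀ : ∀ k ω, 0 ≤ R k ω) (hR : ∀ k, Measurable (R k)) (hQ : ∀ k ω, 0 ≤ Q k ω ∧ Q k ω ≤ q)
    (hYQR : ∀ k, IndepFun (fun ω => Y k ω * Q k ω) (R k) μ)
    (hRρ : ∀ k < N, ∫⁻ ω, .ofReal (R k ω ^ p) ∂μ ≤ .ofReal ρ) :
    ∀ k ≤ N, ∫⁻ ω, .ofReal (Y k ω ^ p) ∂μ ≤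
      (.ofReal (q ^ p) * .ofReal ρ) ^ k * .ofReal (y₀ ^ p) := by
  have hY_nonneg : ∀ k ω, 0 ≤ Y k ω := by
    intro k
    induction k with
    | zero => exact fun ω => (hY₀ ω).symm ▸ hy₀
    | succ k ih => exact fun ω =>
        (hY k ω).symm ▸ mul_nonneg (mul_nonneg (ih ω) (hR₀ k ω)) (hQ k ω).1
  have hstep : ∀ k < N, ∫⁻ ω, .ofReal (Y (k + 1) ω ^ p) ∂μ ≤
      .ofReal (q ^ p) * .ofReal ρ * ∫⁻ ω, .ofReal (Y k ω ^ p) ∂μ := by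
    intro k hk
    simp_rw [hY]
    refine (lintegral_ofReal_pow_mul_mul_le p (hY_nonneg k) (hQ k) (hR k) (hYQR k)).trans ?_
    rw [mul_right_comm]
    gcongr
    exact hRρ k hk
  simpa [hY₀] using le_pow_mul_of_succ_le_mul hstep

theorem one_add_mul_pow_mul_pow_le_exp {C c h T : ℝ} (p n : ℕ) (hC : 0 ≤ C) (hc : 0 ≤ c)
    (hh : 0 ≤ h) (hnh : n * h ≤ T) :
    ((1 + C * h) ^ p * (1 + c * h)) ^ n ≤ exp ((p * C + c) * T) := by
  calc ((1 + C * h) ^ p * (1 + c * h)) ^ n ≤ (exp (C * h) ^ p * exp (c * h)) ^ n := by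
        gcongr <;> linarith [add_one_le_exp (C * h), add_one_le_exp (c * h)]
    _ = exp ((p * C + c) * (n * h)) := by
        rw [← exp_nat_mul, ← exp_add, ← exp_nat_mul]
        ring_nf
    _ ≤ exp ((p * C + c) * T) := by gcongr

theorem integral_le_of_lintegral_ofReal_le {Ω : Type*} [MeasurableSpace Ω] {μ : Measure Ω}
    {f : Ω → ℝ} {b : ℝ} (hb : 0 ≤ b) (hfb : ∫⁻ ω, .ofReal (f ω) ∂μ ≤ .ofReal b) :
    ∫ ω, f ω ∂μ ≤ b := by
  by_cases hf : Integrable f μ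
  · rw [integral_eq_lintegral_pos_part_sub_lintegral_neg_part hf]
    exact (sub_le_self _ ENNReal.toReal_nonneg).trans (ENNReal.toReal_le_of_le_ofReal hb hfb)
  · rwa [integral_undef hf]

theorem stmt18_general (p : ℕ) (C : ℝ) (hC : 0 ≤ C) (m : ℕ)
    (sbar T : ℝ) (hT : 0 < T) :
    ∃ Cp : ℝ, 0 < Cp ∧
      ∀ (Ω : Type) (mΩ : MeasurableSpace Ω) (μ : Measure Ω),
        IsProbabilityMeasure μ →
        ∀ (N : ℕ) (h : ℝ), 0 < h → (N : ℝ) * h ≤ T →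
        ∀ (σ : Fin m → ℝ), (∀ j, |σ j| ≤ sbar) →
        ∀ (ΔW : ℕ → Fin m → Ω → ℝ) (Y Qinv R : ℕ → Ω → ℝ) (y0 : ℝ),
          0 < y0 →
          (∀ ω, Y 0 ω = y0) →
          (∀ n j, Measurable (ΔW n j)) →
          (∀ n j, Measure.map (ΔW n j) μ = gaussianReal 0 (Real.toNNReal h)) →
          (∀ n, iIndepFun (fun j => ΔW n j) μ) →
          (∀ n ω, R n ω = (1 / 2) * (1 + ∑ j, σ j * ΔW n j ω) ^ 2 + 1 / 2) →
          (∀ n ω, 0 ≤ Qinv n ω ∧ Qinv n ω ≤ 1 + C * h) →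
          (∀ n ω, Y (n + 1) ω = Y n ω * R n ω * Qinv n ω) →
          (∀ n, IndepFun (fun ω => Y n ω * Qinv n ω) (R n) μ) →
          ∀ n, n ≤ N → (∫ ω, (Y n ω) ^ p ∂μ) ≤ Cp * y0 ^ p := by
  obtain ⟨c, hc, hR_moment⟩ := exists_lintegral_milsteinFactor_pow_le p m sbar hT.le
  refine ⟨exp ((p * C + c) * T), exp_pos _, fun Ω _ μ _ N h hh hNT σ hσ ΔW Y Qinv R y0 hy0 hY0
    hΔW_meas hΔW hΔW_indep hR hQ hY hYQR n hn => ?_⟩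
  have hR_eq : ∀ k, R k = fun ω => milsteinFactor (∑ j, σ j * ΔW k j ω) := fun k => funext (hR k)
  have hR_meas : ∀ k, Measurable (R k) := fun k => by
    rw [hR_eq]
    unfold milsteinFactor
    fun_prop
  have hI := lintegral_ofReal_pow_le_of_recursion p hy0.le hY0 hY
    (fun k ω => hR_eq k ▸ milsteinFactor_nonneg _) hR_meas hQ hYQR (fun k hk => by
      rw [hR_eq]
      exact hR_moment μ h hh (le_trans (le_mul_of_one_le_left hh.le (by exact_mod_cast hk.pos))
        hNT) σ hσ (ΔW k) (hΔW k) (hΔW_indep k)) n hn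
  rw [← ENNReal.ofReal_mul (by positivity), ← ENNReal.ofReal_pow (by positivity),
    ← ENNReal.ofReal_mul (by positivity)] at hI
  calc ∫ ω, Y n ω ^ p ∂μ ≤ ((1 + C * h) ^ p * (1 + c * h)) ^ n * y0 ^ p :=
        integral_le_of_lintegral_ofReal_le (by positivity) hI
    _ ≤ exp ((p * C + c) * T) * y0 ^ p := by
        gcongr
        exact one_add_mul_pow_mul_pow_le_exp p n hC hc hh.le (le_trans (by gcongr) hNT)

/-- Uniform moment bound for the linear-implicit Milstein recursion
`Y_{n+1} = Y_n · R_n · Qinv_n`, where `R_n = (1/2)(1 + Σⱼ σⱼ ΔWₙʲ)² + 1/2` with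
independent `N(0,h)` Gaussian increments independent of `Yₙ·Qinvₙ`, and
`0 ≤ Qinvₙ ≤ 1 + Ch`.  For each integer `p ≥ 1` there is a constant `C_p`
depending only on `p, C, m, σ̄, T` such that `E[(Yₙ)^p] ≤ C_p · (Y₀)^p` for all
`0 ≤ n ≤ N` with `Nh ≤ T`. -/
theorem stmt18 (p : ℕ) (hp : 1 ≤ p) (C : ℝ) (hC : 0 ≤ C) (m : ℕ)
    (sbar T : ℝ) (hsbar : 0 ≤ sbar) (hT : 0 < T) :
    ∃ Cp : ℝ, 0 < Cp ∧
      ∀ (Ω : Type) (mΩ : MeasurableSpace Ω) (μ : Measure Ω),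
        IsProbabilityMeasure μ →
        ∀ (N : ℕ) (h : ℝ), 0 < h → (N : ℝ) * h ≤ T →
        ∀ (σ : Fin m → ℝ), (∀ j, |σ j| ≤ sbar) →
        ∀ (ΔW : ℕ → Fin m → Ω → ℝ) (Y Qinv R : ℕ → Ω → ℝ) (y0 : ℝ),
          0 < y0 →
          (∀ ω, Y 0 ω = y0) →
          (∀ n j, Measurable (ΔW n j)) →
          (∀ n j, Measure.map (ΔW n j) μ = gaussianReal 0 (Real.toNNReal h)) →
          (∀ n, iIndepFun (fun j => ΔW n j) μ) →
          (∀ n ω, R n ω = (1 / 2) * (1 + ∑ j, σ j * ΔW n j ω) ^ 2 + 1 / 2) →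
          (∀ n ω, 0 ≤ Qinv n ω ∧ Qinv n ω ≤ 1 + C * h) →
          (∀ n ω, Y (n + 1) ω = Y n ω * R n ω * Qinv n ω) →
          (∀ n, IndepFun (fun ω => Y n ω * Qinv n ω) (R n) μ) →
          ∀ n, n ≤ N → (∫ ω, (Y n ω) ^ p ∂μ) ≤ Cp * y0 ^ p :=
  stmt18_general p C hC m sbar T hT
end
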